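/- Let C ⊆ ℝ_+^∞ be a closed set such that for every p ≥ 1, PROJ_p(C) is closed in ℝ_+^p and (z_1,...,z_p) ∈ PROJ_p(C) implies (z_1,...,z_p,0,0,...) ∈ C. Let μ_n (n ≥ 1) and μ_0 be elements of M(ℝ_+^∞ \ C). Then μ_n → μ_0 in M(ℝ_+^∞ \ C) if and only if for every p ≥ 1 with ℝ_+^p \ PROJ_p(C) ≠ ∅ one has ∫ (g ∘ PROJ_p) dμ_n → ∫ (g ∘ PROJ_p) dμ_0 for every bounded continuous g : ℝ_+^p \ PROJ_p(C) → [0,∞) whose support is at positive L^1-distance from PROJ_p(C); that is, the pushforwards μ_n ∘ PROJ_p^{-1} converge to μ_0 ∘ PROJ_p^{-1} in M(ℝ_+^p \ PROJ_p(C)). -/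

import Mathlib

open MeasureTheory Filter Topology Set ENNReal NNReal

noncomputable section

/-- The metric `d_∞` on `ℝ₊^∞ = (ℕ → ℝ≥0)` (indices shifted so that `x_1 = x 0`):
`d_∞(x,y) = Σ_{i≥1} 2^{-i} (|x_i − y_i| ∧ 1)`. -/
def dseq (x y : ℕ → ℝ≥0) : ℝ := ∑' i : ℕ, (2 : ℝ)⁻¹ ^ (i + 1) * min (dist (x i) (y i)) 1

/-- The `d_∞`-distance from a point to a set. -/
def dseqSet (x : ℕ → ℝ≥0) (C : Set (ℕ → ℝ≥0)) : ℝ := sInf (dseq x '' C)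

/-- `A` is bounded away from `C` in the metric `d_∞`. -/
def BddAwaySeq (C A : Set (ℕ → ℝ≥0)) : Prop := ∃ r > 0, ∀ x ∈ A, r ≤ dseqSet x C

/-- The class `C(ℝ₊^∞ \ C)` of test functions: bounded, nonnegative, continuous off `C`,
vanishing at `d_∞`-distance `< r` from `C` for some `r > 0`. -/
def IsCOseq (C : Set (ℕ → ℝ≥0)) (f : (ℕ → ℝ≥0) → ℝ) : Prop :=
  ContinuousOn f Cᶜ ∧ (∀ x, 0 ≤ f x) ∧ (∃ B : ℝ, ∀ x, f x ≤ B) ∧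
    ∃ r > 0, ∀ x, dseqSet x C < r → f x = 0

/-- The class `M(ℝ₊^∞ \ C)`: Borel measures giving no mass to `C` and finite mass to
each region at `d_∞`-distance at least `r > 0` from `C`. -/
def MemMOseq (C : Set (ℕ → ℝ≥0)) (μ : Measure (ℕ → ℝ≥0)) : Prop :=
  μ C = 0 ∧ ∀ r : ℝ, 0 < r → μ {x | r ≤ dseqSet x C} < ⊤

/-- Convergence in `M(ℝ₊^∞ \ C)`. -/
def MOTendstoSeq (C : Set (ℕ → ℝ≥0)) (μn : ℕ → Measure (ℕ → ℝ≥0))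
    (μ : Measure (ℕ → ℝ≥0)) : Prop :=
  ∀ f : (ℕ → ℝ≥0) → ℝ, IsCOseq C f →
    Tendsto (fun n => ∫ x, f x ∂ μn n) atTop (𝓝 (∫ x, f x ∂ μ))

/-- The projection `PROJ_p` onto the first `p` coordinates. -/
def PROJ (p : ℕ) (x : ℕ → ℝ≥0) : Fin p → ℝ≥0 := fun i => x i

/-- The `L¹` metric on `ℝ₊^p`. -/
def dL1 {p : ℕ} (u v : Fin p → ℝ≥0) : ℝ := ∑ i, dist (u i) (v i)

/-- The `L¹`-distance from a point of `ℝ₊^p` to a set. -/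
def dL1Set {p : ℕ} (u : Fin p → ℝ≥0) (A : Set (Fin p → ℝ≥0)) : ℝ := sInf (dL1 u '' A)

/-!
Zero padding `fill_p : ℝ₊^p → ℝ₊^∞` is `1`-Lipschitz from `L¹` to `d_∞`, maps `PROJ_p C` into `C`
by hypothesis, and `d_∞(x, fill_p (PROJ_p x)) ≤ 2^{-p}`; in the other direction `PROJ_p` is
locally Lipschitz from `d_∞` to `L¹`. Hence test functions of `ℝ₊^p \ PROJ_p C` composed with
`PROJ_p` are test functions of `ℝ₊^∞ \ C`, which is the forward direction, and test functions `φ`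
of `ℝ₊^∞ \ C` composed with `fill_p` are test functions of `ℝ₊^p \ PROJ_p C`.

Conversely, the functions `φ ∘ fill_p ∘ PROJ_p` first bound the masses `μₙ {d_∞(·, C) ≥ ρ}`
uniformly in `n`; then, for `d_∞`-Lipschitz `φ`, they approximate `φ` within `O(2^{-p})` uniformly
in `n`, so `∫ φ dμₙ → ∫ φ dμ₀`. The Lipschitz functions `min 1 (k d_∞(·, Gᶜ))` increase to the
indicator of an open set `G`, which gives `μ₀ G ≤ liminf μₙ G` when `G` is bounded away from `C`,
and the portmanteau argument turns this into `∫ f dμ₀ ≤ liminf ∫ f dμₙ` for continuous `f ≥ 0`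
vanishing near `C`. Applying this to a test function `f` and to `B · cutoff - f`, whose integrals
add up to the convergent integrals of the Lipschitz function `B · cutoff`, gives convergence.
-/

lemma eventually_inv_two_pow_le {δ : ℝ} (hδ : 0 < δ) : ∀ᶠ p : ℕ in atTop, (2 : ℝ)⁻¹ ^ p ≤ δ :=
  (_root_.tendsto_pow_atTop_nhds_zero_of_lt_one (by norm_num)
    (by norm_num : (2 : ℝ)⁻¹ < 1)).eventually (ge_mem_nhds hδ)

lemma tendsto_of_forall_approx {α ι κ : Type*} [PseudoMetricSpace α] {l : Filter ι}
    {l' : Filter κ} [l'.NeBot] {a : ι → α} {a₀ : α} {b : κ → ι → α} {b₀ : κ → α} {ε : κ → ℝ}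
    (hε : Tendsto ε l' (𝓝 0)) (hb : ∀ᶠ p in l', Tendsto (b p) l (𝓝 (b₀ p)))
    (hab : ∀ᶠ p in l', ∀ i, dist (a i) (b p i) ≤ ε p) (ha₀ : ∀ᶠ p in l', dist a₀ (b₀ p) ≤ ε p) :
    Tendsto a l (𝓝 a₀) := by
  refine Metric.tendsto_nhds.2 fun δ hδ => ?_
  obtain ⟨p, hεp, hbp, habp, ha₀p⟩ :=
    ((hε.eventually (gt_mem_nhds (div_pos hδ three_pos))).and (hb.and (hab.and ha₀))).exists
  filter_upwards [Metric.tendsto_nhds.1 hbp _ (div_pos hδ three_pos)] with i hi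
  calc dist (a i) a₀ ≤ dist (a i) (b p i) + dist (b p i) (b₀ p) + dist (b₀ p) a₀ :=
        dist_triangle4 _ _ _ _
    _ < δ := by rw [dist_comm (b₀ p)]; linarith [habp i]

lemma tendsto_of_forall_lt_of_forall_lt_sub {ι : Type*} {l : Filter ι} {a c : ι → ℝ}
    {a₀ c₀ : ℝ} (ha : ∀ t < a₀, ∀ᶠ i in l, t < a i)
    (hca : ∀ t < c₀ - a₀, ∀ᶠ i in l, t < c i - a i) (hc : Tendsto c l (𝓝 c₀)) :
    Tendsto a l (𝓝 a₀) := by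
  refine tendsto_order.2 ⟨ha, fun u hu => ?_⟩
  filter_upwards [hca (c₀ - a₀ - (u - a₀) / 2) (by linarith),
    hc.eventually (gt_mem_nhds (show c₀ < c₀ + (u - a₀) / 2 by linarith))] with i h₁ h₂
  linarith

lemma continuous_of_continuousOn_compl {X : Type*} [TopologicalSpace X] {s : Set X}
    {D f : X → ℝ} {r : ℝ} (hD : Continuous D) (hDs : ∀ x ∈ s, D x = 0) (hr : 0 < r)
    (hfr : ∀ x, D x < r → f x = 0) (hf : ContinuousOn f sᶜ) : Continuous f := by
  refine continuous_iff_continuousAt.2 fun x => ?_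
  by_cases hx : x ∈ closure s
  · have hDx : D x ≤ 0 :=
      closure_minimal (fun y hy => (hDs y hy).le) (isClosed_le hD continuous_const) hx
    have hf0 : f =ᶠ[𝓝 x] fun _ => 0 :=
      eventually_of_mem ((isOpen_lt hD continuous_const).mem_nhds (hDx.trans_lt hr)) hfr
    exact continuousAt_const.congr hf0.symm
  · exact hf.continuousAt (mem_of_superset (isClosed_closure.compl_mem_nhds hx)
      (compl_subset_compl.2 subset_closure))

lemma measureReal_le_integral_of_one_le {X : Type*} [MeasurableSpace X] {μ : Measure X}
    {s : Set X} {f : X → ℝ} (hf : Integrable f μ) (hf0 : ∀ x, 0 ≤ f x) (hs : ∀ x ∈ s, 1 ≤ f x) :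
    μ.real s ≤ ∫ x, f x ∂μ := by
  have hfin : μ {x | 1 ≤ f x} ≠ ∞ := by
    simpa [Real.norm_of_nonneg (hf0 _)] using (hf.measure_norm_ge_lt_top one_pos).ne
  calc μ.real s ≤ 1 * μ.real {x | 1 ≤ f x} := by rw [one_mul]; exact measureReal_mono hs hfin
    _ ≤ ∫ x, f x ∂μ := mul_meas_ge_le_integral_of_nonneg (Eventually.of_forall hf0) hf 1

lemma abs_integral_sub_le_of_le_indicator {X : Type*} [MeasurableSpace X] {μ : Measure X}
    {s : Set X} {f g : X → ℝ} {c : ℝ} (hf : Integrable f μ) (hg : Integrable g μ)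
    (hs : MeasurableSet s) (hμs : μ s ≠ ∞) (hfg : ∀ x, |f x - g x| ≤ s.indicator (fun _ => c) x) :
    |∫ x, f x ∂μ - ∫ x, g x ∂μ| ≤ c * μ.real s := by
  rw [← integral_sub hf hg, ← Real.norm_eq_abs]
  calc ‖∫ x, f x - g x ∂μ‖ ≤ ∫ x, s.indicator (fun _ => c) x ∂μ :=
        norm_integral_le_of_norm_le ((integrableOn_const hμs).integrable_indicator hs)
          (Eventually.of_forall hfg)
    _ = c * μ.real s := by rw [integral_indicator_const _ hs, smul_eq_mul, mul_comm]

lemma abs_min_one_sub_min_one_le (a b : ℝ) : |min 1 a - min 1 b| ≤ |a - b| :=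
  (abs_min_sub_min_le_max _ _ _ _).trans (by simp)

structure IsPseudoDist {X : Type*} (d : X → X → ℝ) : Prop where
  nonneg : ∀ x y, 0 ≤ d x y
  self : ∀ x, d x x = 0
  comm : ∀ x y, d x y = d y x
  triangle : ∀ x y z, d x z ≤ d x y + d y z

namespace IsPseudoDist

variable {X : Type*} {d : X → X → ℝ}

lemma sInf_image_nonneg (hd : IsPseudoDist d) (x : X) (s : Set X) : 0 ≤ sInf (d x '' s) :=
  Real.sInf_nonneg (forall_mem_image.2 fun y _ => hd.nonneg x y)

lemma sInf_image_le (hd : IsPseudoDist d) {s : Set X} {x y : X} (hy : y ∈ s) :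
    sInf (d x '' s) ≤ d x y :=
  csInf_le ⟨0, forall_mem_image.2 fun z _ => hd.nonneg x z⟩ (mem_image_of_mem _ hy)

lemma sInf_image_eq_zero (hd : IsPseudoDist d) {s : Set X} {x : X} (hx : x ∈ s) :
    sInf (d x '' s) = 0 :=
  le_antisymm (hd.self x ▸ hd.sInf_image_le hx) (hd.sInf_image_nonneg x s)

lemma sInf_image_le_add (hd : IsPseudoDist d) (x y : X) (s : Set X) :
    sInf (d x '' s) ≤ d x y + sInf (d y '' s) := by
  rcases s.eq_empty_or_nonempty with rfl | hs
  · simpa using hd.nonneg x y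
  · rw [← sub_le_iff_le_add']
    refine le_csInf (hs.image _) (forall_mem_image.2 fun z hz => ?_)
    linarith [hd.sInf_image_le (x := x) hz, hd.triangle x y z]

lemma abs_sub_sInf_image_le (hd : IsPseudoDist d) (x y : X) (s : Set X) :
    |sInf (d x '' s) - sInf (d y '' s)| ≤ d x y :=
  abs_sub_le_iff.2 ⟨by linarith [hd.sInf_image_le_add x y s],
    by linarith [hd.sInf_image_le_add y x s, hd.comm x y]⟩

variable [TopologicalSpace X]

lemma continuous_of_abs_sub_le (hd : IsPseudoDist d) (hc : ∀ y, ContinuousAt (fun x => d x y) y)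
    {f : X → ℝ} {L : ℝ} (hf : ∀ x y, |f x - f y| ≤ L * d x y) : Continuous f := by
  refine continuous_iff_continuousAt.2 fun y => tendsto_iff_dist_tendsto_zero.2 ?_
  have hL : Tendsto (fun x => L * d x y) (𝓝 y) (𝓝 0) := by
    simpa [hd.self] using (hc y).tendsto.const_mul L
  exact squeeze_zero (fun _ => dist_nonneg) (fun x => (Real.dist_eq _ _).trans_le (hf x y)) hL

lemma continuous_sInf_image (hd : IsPseudoDist d) (hc : ∀ y, ContinuousAt (fun x => d x y) y)
    (s : Set X) : Continuous fun x => sInf (d x '' s) :=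
  hd.continuous_of_abs_sub_le hc (L := 1) fun x y => by simpa using hd.abs_sub_sInf_image_le x y s

end IsPseudoDist

def fill (p : ℕ) (z : Fin p → ℝ≥0) : ℕ → ℝ≥0 := fun n => if h : n < p then z ⟨n, h⟩ else 0

lemma PROJ_fill (p : ℕ) (z : Fin p → ℝ≥0) : PROJ p (fill p z) = z := by
  funext i
  simp [PROJ, fill]

lemma continuous_PROJ (p : ℕ) : Continuous (PROJ p) :=
  continuous_pi fun i => continuous_apply (i : ℕ)

lemma continuous_fill (p : ℕ) : Continuous (fill p) := by
  refine continuous_pi fun n => ?_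
  by_cases h : n < p
  · simpa [fill, h] using continuous_apply (⟨n, h⟩ : Fin p)
  · simpa [fill, h] using continuous_const

lemma summable_inv_two_pow_succ : Summable fun i : ℕ => (2 : ℝ)⁻¹ ^ (i + 1) :=
  (summable_geometric_of_lt_one (by norm_num) (by norm_num)).comp_injective (add_left_injective 1)

lemma summable_dseq (x y : ℕ → ℝ≥0) :
    Summable fun i => (2 : ℝ)⁻¹ ^ (i + 1) * min (dist (x i) (y i)) 1 :=
  .of_nonneg_of_le (fun _ => by positivity)
    (fun _ => mul_le_of_le_one_right (by positivity) (min_le_right _ _))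
    summable_inv_two_pow_succ

lemma isPseudoDist_dseq : IsPseudoDist dseq where
  nonneg x y := tsum_nonneg fun _ => by positivity
  self x := by simp [dseq]
  comm x y := by simp only [dseq, dist_comm]
  triangle x y z := by
    rw [dseq, dseq, dseq, ← (summable_dseq x y).tsum_add (summable_dseq y z)]
    refine (summable_dseq x z).tsum_le_tsum (fun i => ?_)
      ((summable_dseq x y).add (summable_dseq y z))
    rw [← mul_add]
    gcongr
    have hxz := dist_triangle (x i) (y i) (z i)
    have hxy := dist_nonneg (x := x i) (y := y i)
    have hyz := dist_nonneg (x := y i) (y := z i)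
    simp only [min_def]
    split_ifs <;> linarith

lemma isPseudoDist_dL1 (p : ℕ) : IsPseudoDist (dL1 (p := p)) where
  nonneg u v := Finset.sum_nonneg fun _ _ => dist_nonneg
  self u := by simp [dL1]
  comm u v := by simp only [dL1, dist_comm]
  triangle u v w := by
    rw [dL1, dL1, dL1, ← Finset.sum_add_distrib]
    exact Finset.sum_le_sum fun _ _ => dist_triangle _ _ _

lemma continuous_dseq_left (y : ℕ → ℝ≥0) : Continuous fun x => dseq x y :=
  continuous_tsum (fun i => continuous_const.mul (((continuous_apply i).dist continuous_const).min
      continuous_const))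
    summable_inv_two_pow_succ
    fun i x => by
      rw [Real.norm_of_nonneg (by positivity)]
      exact mul_le_of_le_one_right (by positivity) (min_le_right _ _)

lemma continuous_dseqSet (C : Set (ℕ → ℝ≥0)) : Continuous fun x => dseqSet x C :=
  isPseudoDist_dseq.continuous_sInf_image (fun y => (continuous_dseq_left y).continuousAt) C

lemma continuous_dL1Set {p : ℕ} (A : Set (Fin p → ℝ≥0)) : Continuous fun u => dL1Set u A :=
  (isPseudoDist_dL1 p).continuous_sInf_image
    (fun _ => (continuous_finsetSum _ fun i _ =>
      (continuous_apply i).dist continuous_const).continuousAt) A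

lemma inv_two_pow_mul_min_le_dseq (x y : ℕ → ℝ≥0) (i : ℕ) :
    (2 : ℝ)⁻¹ ^ (i + 1) * min (dist (x i) (y i)) 1 ≤ dseq x y :=
  (summable_dseq x y).le_tsum i fun _ _ => by positivity

lemma dist_le_of_dseq_lt {x y : ℕ → ℝ≥0} {i : ℕ} (h : dseq x y < (2 : ℝ)⁻¹ ^ (i + 1)) :
    dist (x i) (y i) ≤ 2 ^ (i + 1) * dseq x y := by
  have hi := inv_two_pow_mul_min_le_dseq x y i
  have hlt : dist (x i) (y i) < 1 := by
    by_contra! h1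
    rw [min_eq_right h1, mul_one] at hi
    linarith
  rw [min_eq_left hlt.le] at hi
  calc dist (x i) (y i) = 2 ^ (i + 1) * ((2 : ℝ)⁻¹ ^ (i + 1) * dist (x i) (y i)) := by
        rw [← mul_assoc, ← mul_pow]; norm_num
    _ ≤ 2 ^ (i + 1) * dseq x y := by gcongr

lemma dL1_PROJ_le {p : ℕ} {x y : ℕ → ℝ≥0} (h : dseq x y < (2 : ℝ)⁻¹ ^ p) :
    dL1 (PROJ p x) (PROJ p y) ≤ p * 2 ^ p * dseq x y := by
  calc dL1 (PROJ p x) (PROJ p y) = ∑ i : Fin p, dist (x i) (y i) := rfl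
    _ ≤ ∑ _i : Fin p, 2 ^ p * dseq x y := Finset.sum_le_sum fun i _ => by
        have hi : (2 : ℝ)⁻¹ ^ p ≤ (2 : ℝ)⁻¹ ^ ((i : ℕ) + 1) :=
          pow_le_pow_of_le_one (by norm_num) (by norm_num) i.isLt
        refine (dist_le_of_dseq_lt (h.trans_le hi)).trans ?_
        gcongr
        · exact isPseudoDist_dseq.nonneg x y
        · norm_num
        · exact i.isLt
    _ = p * 2 ^ p * dseq x y := by simp [mul_assoc]

lemma dseq_le_dL1_add_tsum (p : ℕ) (x y : ℕ → ℝ≥0) :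
    dseq x y ≤ dL1 (PROJ p x) (PROJ p y) +
      ∑' i, (2 : ℝ)⁻¹ ^ (i + p + 1) * min (dist (x (i + p)) (y (i + p))) 1 := by
  rw [dseq, ← (summable_dseq x y).sum_add_tsum_nat_add p]
  gcongr
  rw [show dL1 (PROJ p x) (PROJ p y) = ∑ i : Fin p, dist (x i) (y i) from rfl,
    Fin.sum_univ_eq_sum_range (fun i => dist (x i) (y i))]
  gcongr with i
  exact (mul_le_of_le_one_left (by positivity) (pow_le_one₀ (by norm_num) (by norm_num))).trans
    (min_le_left _ _)

lemma dseq_le_dL1_add_inv_two_pow (p : ℕ) (x y : ℕ → ℝ≥0) :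
    dseq x y ≤ dL1 (PROJ p x) (PROJ p y) + (2 : ℝ)⁻¹ ^ p := by
  refine (dseq_le_dL1_add_tsum p x y).trans (add_le_add_right ?_ _)
  have hgeom : ∀ i : ℕ, (2 : ℝ)⁻¹ ^ (i + p + 1) = (2 : ℝ)⁻¹ ^ p / 2 / 2 ^ i := fun i => by
    simp only [pow_add, pow_one, inv_pow]; field_simp
  calc ∑' i, (2 : ℝ)⁻¹ ^ (i + p + 1) * min (dist (x (i + p)) (y (i + p))) 1
      ≤ ∑' i : ℕ, (2 : ℝ)⁻¹ ^ p / 2 / 2 ^ i :=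
        ((_root_.summable_nat_add_iff p).2 (summable_dseq x y)).tsum_le_tsum
          (fun i => hgeom i ▸ mul_le_of_le_one_right (by positivity) (min_le_right _ _))
          (summable_geometric_two' _)
    _ = (2 : ℝ)⁻¹ ^ p := tsum_geometric_two' _

lemma dseq_fill_le_dL1 (p : ℕ) (z w : Fin p → ℝ≥0) : dseq (fill p z) (fill p w) ≤ dL1 z w := by
  simpa [PROJ_fill, fill] using dseq_le_dL1_add_tsum p (fill p z) (fill p w)

lemma dseq_fill_PROJ_le (p : ℕ) (x : ℕ → ℝ≥0) : dseq x (fill p (PROJ p x)) ≤ (2 : ℝ)⁻¹ ^ p := by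
  simpa [PROJ_fill, (isPseudoDist_dL1 p).self] using
    dseq_le_dL1_add_inv_two_pow p x (fill p (PROJ p x))

lemma abs_dseqSet_fill_PROJ_sub_le (p : ℕ) (x : ℕ → ℝ≥0) (C : Set (ℕ → ℝ≥0)) :
    |dseqSet (fill p (PROJ p x)) C - dseqSet x C| ≤ (2 : ℝ)⁻¹ ^ p :=
  (isPseudoDist_dseq.abs_sub_sInf_image_le _ x C).trans
    (isPseudoDist_dseq.comm _ x ▸ dseq_fill_PROJ_le p x)

lemma dseqSet_pos {A : Set (ℕ → ℝ≥0)} (hA : IsClosed A) (hne : A.Nonempty) {x : ℕ → ℝ≥0}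
    (hx : x ∉ A) : 0 < dseqSet x A := by
  refine (isPseudoDist_dseq.sInf_image_nonneg x A).lt_of_ne fun h0 => hx (hA.closure_subset ?_)
  have hclose : ∀ n : ℕ, ∃ y ∈ A, dseq x y < (2 : ℝ)⁻¹ ^ n := fun n => by
    obtain ⟨_, ⟨y, hy, rfl⟩, h⟩ := exists_lt_of_csInf_lt (hne.image _)
      (show dseqSet x A < (2 : ℝ)⁻¹ ^ n by rw [dseqSet, ← h0]; positivity)
    exact ⟨y, hy, h⟩
  choose y hyA hy using hclose
  refine mem_closure_of_tendsto (b := atTop) (tendsto_pi_nhds.2 fun i => ?_)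
    (Eventually.of_forall hyA)
  have hgeom : Tendsto (fun n : ℕ => 2 ^ (i + 1) * (2 : ℝ)⁻¹ ^ n) atTop (𝓝 0) := by
    simpa using (_root_.tendsto_pow_atTop_nhds_zero_of_lt_one (by norm_num)
      (by norm_num : (2 : ℝ)⁻¹ < 1)).const_mul (2 ^ (i + 1))
  rw [tendsto_iff_dist_tendsto_zero]
  refine squeeze_zero' (Eventually.of_forall fun _ => dist_nonneg) ?_ hgeom
  filter_upwards [eventually_ge_atTop (i + 1)] with n hn
  rw [dist_comm]
  calc dist (x i) (y n i) ≤ 2 ^ (i + 1) * dseq x (y n) :=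
        dist_le_of_dseq_lt ((hy n).trans_le (pow_le_pow_of_le_one (by norm_num) (by norm_num) hn))
    _ ≤ 2 ^ (i + 1) * (2 : ℝ)⁻¹ ^ n := by gcongr; exact (hy n).le

lemma dseqSet_fill_le_dL1Set {C : Set (ℕ → ℝ≥0)} {p : ℕ}
    (hCz : ∀ z ∈ PROJ p '' C, fill p z ∈ C) (u : Fin p → ℝ≥0) :
    dseqSet (fill p u) C ≤ dL1Set u (PROJ p '' C) := by
  rcases C.eq_empty_or_nonempty with rfl | hne
  · simp [dseqSet, dL1Set]
  · refine le_csInf ((hne.image _).image _) (forall_mem_image.2 fun v hv => ?_)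
    exact (isPseudoDist_dseq.sInf_image_le (hCz v hv)).trans (dseq_fill_le_dL1 p u v)

lemma dL1Set_PROJ_le {C : Set (ℕ → ℝ≥0)} {p : ℕ} {x : ℕ → ℝ≥0} {c : ℝ}
    (h : dseqSet x C < c) (hc : c ≤ (2 : ℝ)⁻¹ ^ p) :
    dL1Set (PROJ p x) (PROJ p '' C) ≤ p * 2 ^ p * c := by
  rcases C.eq_empty_or_nonempty with rfl | hne
  · have : 0 < c := (isPseudoDist_dseq.sInf_image_nonneg x ∅).trans_lt h
    simp only [dL1Set, image_empty, Real.sInf_empty]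
    positivity
  · obtain ⟨_, ⟨y, hy, rfl⟩, hxy⟩ := exists_lt_of_csInf_lt (hne.image _) h
    calc dL1Set (PROJ p x) (PROJ p '' C) ≤ dL1 (PROJ p x) (PROJ p y) :=
          (isPseudoDist_dL1 p).sInf_image_le (mem_image_of_mem _ hy)
      _ ≤ p * 2 ^ p * dseq x y := dL1_PROJ_le (hxy.trans_le hc)
      _ ≤ p * 2 ^ p * c := by gcongr

lemma IsCOseq.continuous {C : Set (ℕ → ℝ≥0)} {f : (ℕ → ℝ≥0) → ℝ} (hf : IsCOseq C f) :
    Continuous f := by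
  obtain ⟨hfc, -, -, r, hr, hfr⟩ := hf
  exact continuous_of_continuousOn_compl (continuous_dseqSet C)
    (fun _ hx => isPseudoDist_dseq.sInf_image_eq_zero hx) hr hfr hfc

lemma isCOseq_comp_PROJ {C : Set (ℕ → ℝ≥0)} {p : ℕ} {g : (Fin p → ℝ≥0) → ℝ}
    (hg : ContinuousOn g (PROJ p '' C)ᶜ) (hg0 : ∀ u, 0 ≤ g u) (hgB : ∃ B : ℝ, ∀ u, g u ≤ B)
    (hgr : ∃ r > 0, ∀ u, dL1Set u (PROJ p '' C) < r → g u = 0) :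
    IsCOseq C fun x => g (PROJ p x) := by
  obtain ⟨B, hB⟩ := hgB
  obtain ⟨r, hr, hgr⟩ := hgr
  have hgc : Continuous g := continuous_of_continuousOn_compl (continuous_dL1Set _)
    (fun _ hu => (isPseudoDist_dL1 p).sInf_image_eq_zero hu) hr hgr hg
  set K : ℝ := p * 2 ^ p
  refine ⟨(hgc.comp (continuous_PROJ p)).continuousOn, fun _ => hg0 _, ⟨B, fun _ => hB _⟩,
    min ((2 : ℝ)⁻¹ ^ p) (r / (K + 1)), by positivity, fun x hx => hgr _ ?_⟩
  calc dL1Set (PROJ p x) (PROJ p '' C) ≤ K * min ((2 : ℝ)⁻¹ ^ p) (r / (K + 1)) :=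
        dL1Set_PROJ_le hx (min_le_left _ _)
    _ ≤ K * (r / (K + 1)) := by gcongr; exact min_le_right _ _
    _ < r := by rw [mul_div_assoc', div_lt_iff₀ (by positivity)]; nlinarith

lemma MemMOseq.integrable {C : Set (ℕ → ℝ≥0)} {μ : Measure (ℕ → ℝ≥0)} (hμ : MemMOseq C μ)
    {f : (ℕ → ℝ≥0) → ℝ} {B r : ℝ} (hf : Continuous f) (hf0 : ∀ x, 0 ≤ f x)
    (hfB : ∀ x, f x ≤ B) (hr : 0 < r) (hfr : ∀ x, dseqSet x C < r → f x = 0) :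
    Integrable f μ :=
  IntegrableOn.integrable_of_forall_notMem_eq_zero (s := {x | r ≤ dseqSet x C})
    (Measure.integrableOn_of_bounded (hμ.2 r hr).ne hf.aestronglyMeasurable
      (ae_of_all _ fun x => (Real.norm_of_nonneg (hf0 x)).trans_le (hfB x)))
    fun x hx => hfr x (not_le.1 hx)

def cutoff (C : Set (ℕ → ℝ≥0)) (r : ℝ) (x : ℕ → ℝ≥0) : ℝ :=
  min 1 (max 0 (2 * dseqSet x C / r - 1))

section Cutoff

variable {C : Set (ℕ → ℝ≥0)} {r : ℝ}

lemma continuous_cutoff : Continuous (cutoff C r) :=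
  continuous_const.min (continuous_const.max
    (((continuous_const.mul (continuous_dseqSet C)).div_const r).sub continuous_const))

lemma cutoff_nonneg (x : ℕ → ℝ≥0) : 0 ≤ cutoff C r x := le_min zero_le_one (le_max_left _ _)

lemma cutoff_le_one (x : ℕ → ℝ≥0) : cutoff C r x ≤ 1 := min_le_left _ _

lemma cutoff_eq_zero (hr : 0 < r) {x : ℕ → ℝ≥0} (h : dseqSet x C ≤ r / 2) :
    cutoff C r x = 0 := by
  have : 2 * dseqSet x C / r - 1 ≤ 0 := by
    rw [sub_nonpos, div_le_one hr]; linarith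
  simp [cutoff, max_eq_left this]

lemma cutoff_eq_one (hr : 0 < r) {x : ℕ → ℝ≥0} (h : r ≤ dseqSet x C) : cutoff C r x = 1 := by
  have : 1 ≤ 2 * dseqSet x C / r - 1 := by
    rw [le_sub_iff_add_le, le_div_iff₀ hr]; linarith
  simp [cutoff, max_eq_right (zero_le_one.trans this), this]

lemma abs_cutoff_sub_le (hr : 0 < r) (x y : ℕ → ℝ≥0) :
    |cutoff C r x - cutoff C r y| ≤ 2 / r * dseq x y := by
  calc |cutoff C r x - cutoff C r y|
      ≤ |(2 * dseqSet x C / r - 1) - (2 * dseqSet y C / r - 1)| := by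
        refine (abs_min_one_sub_min_one_le _ _).trans ?_
        rw [max_comm 0, max_comm 0]
        exact abs_max_sub_max_le_abs _ _ _
    _ = 2 / r * |dseqSet x C - dseqSet y C| := by
        rw [sub_sub_sub_cancel_right, ← abs_of_pos (div_pos two_pos hr), ← abs_mul]
        ring_nf
    _ ≤ 2 / r * dseq x y := by
        gcongr
        exact isPseudoDist_dseq.abs_sub_sInf_image_le x y C

end Cutoff

def MOTendstoProj (C : Set (ℕ → ℝ≥0)) (μn : ℕ → Measure (ℕ → ℝ≥0))
    (μ : Measure (ℕ → ℝ≥0)) : Prop :=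
  ∀ p : ℕ, 1 ≤ p → ((PROJ p '' C)ᶜ : Set (Fin p → ℝ≥0)).Nonempty →
    ∀ g : (Fin p → ℝ≥0) → ℝ, ContinuousOn g (PROJ p '' C)ᶜ →
      (∀ u, 0 ≤ g u) → (∃ B : ℝ, ∀ u, g u ≤ B) →
      (∃ r > 0, ∀ u, dL1Set u (PROJ p '' C) < r → g u = 0) →
      Tendsto (fun n => ∫ x, g (PROJ p x) ∂ μn n) atTop (𝓝 (∫ x, g (PROJ p x) ∂ μ))

lemma MOTendstoSeq.moTendstoProj {C : Set (ℕ → ℝ≥0)} {μn : ℕ → Measure (ℕ → ℝ≥0)}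
    {μ : Measure (ℕ → ℝ≥0)} (h : MOTendstoSeq C μn μ) : MOTendstoProj C μn μ :=
  fun _ _ _ _ hg hg0 hgB hgr => h _ (isCOseq_comp_PROJ hg hg0 hgB hgr)

section IndicatorApprox

variable {G : Set (ℕ → ℝ≥0)}

lemma continuous_min_one_mul_dseqSet (k : ℕ) : Continuous fun x => min 1 (k * dseqSet x Gᶜ) :=
  continuous_const.min (continuous_const.mul (continuous_dseqSet _))

lemma min_one_mul_dseqSet_nonneg (k : ℕ) (x : ℕ → ℝ≥0) : 0 ≤ min 1 (k * dseqSet x Gᶜ) :=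
  le_min zero_le_one (mul_nonneg k.cast_nonneg (isPseudoDist_dseq.sInf_image_nonneg x _))

lemma abs_min_one_mul_dseqSet_sub_le (k : ℕ) (x y : ℕ → ℝ≥0) :
    |min 1 (k * dseqSet x Gᶜ) - min 1 (k * dseqSet y Gᶜ)| ≤ k * dseq x y := by
  refine (abs_min_one_sub_min_one_le _ _).trans ?_
  rw [← mul_sub, abs_mul, Nat.abs_cast]
  gcongr
  exact isPseudoDist_dseq.abs_sub_sInf_image_le x y _

lemma tendsto_lintegral_min_one_mul_dseqSet_compl (hG : IsOpen G) (hGc : Gᶜ.Nonempty)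
    (μ : Measure (ℕ → ℝ≥0)) :
    Tendsto (fun k : ℕ => ∫⁻ x, ENNReal.ofReal (min 1 (k * dseqSet x Gᶜ)) ∂μ) atTop
      (𝓝 (μ G)) := by
  rw [← lintegral_indicator_one hG.measurableSet]
  refine lintegral_tendsto_of_tendsto_of_monotone
    (fun k => (continuous_min_one_mul_dseqSet k).measurable.ennreal_ofReal.aemeasurable)
    (ae_of_all _ fun x k l hkl => ENNReal.ofReal_le_ofReal (min_le_min_left _
      (mul_le_mul_of_nonneg_right (Nat.cast_le.2 hkl)
        (isPseudoDist_dseq.sInf_image_nonneg x _)))) (ae_of_all _ fun x => ?_)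
  by_cases hx : x ∈ G
  · have hpos : 0 < dseqSet x Gᶜ := dseqSet_pos hG.isClosed_compl hGc (not_not.2 hx)
    refine tendsto_const_nhds.congr' ?_
    filter_upwards [eventually_ge_atTop ⌈(dseqSet x Gᶜ)⁻¹⌉₊] with k hk
    have : 1 ≤ (k : ℝ) * dseqSet x Gᶜ := (inv_le_iff_one_le_mul₀ hpos).1 (Nat.ceil_le.1 hk)
    simp [indicator_of_mem hx, this]
  · simp [indicator_of_notMem hx, dseqSet,
      isPseudoDist_dseq.sInf_image_eq_zero (show x ∈ Gᶜ from hx)]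

end IndicatorApprox

namespace MOTendstoProj

variable {C : Set (ℕ → ℝ≥0)} {μn : ℕ → Measure (ℕ → ℝ≥0)} {μ : Measure (ℕ → ℝ≥0)}

lemma tendsto_integral_comp_fill (H : MOTendstoProj C μn μ) {p : ℕ} (hp : 1 ≤ p)
    (hCz : ∀ z ∈ PROJ p '' C, fill p z ∈ C) {φ : (ℕ → ℝ≥0) → ℝ} {B r : ℝ}
    (hφ : Continuous φ) (hφ0 : ∀ x, 0 ≤ φ x) (hφB : ∀ x, φ x ≤ B) (hr : 0 < r)
    (hφr : ∀ x, dseqSet x C < r → φ x = 0) :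
    Tendsto (fun n => ∫ x, φ (fill p (PROJ p x)) ∂μn n) atTop
      (𝓝 (∫ x, φ (fill p (PROJ p x)) ∂μ)) := by
  have hvan : ∀ u, dL1Set u (PROJ p '' C) < r → φ (fill p u) = 0 :=
    fun u hu => hφr _ ((dseqSet_fill_le_dL1Set hCz u).trans_lt hu)
  by_cases hne : ((PROJ p '' C)ᶜ : Set (Fin p → ℝ≥0)).Nonempty
  · exact H p hp hne (fun u => φ (fill p u)) (hφ.comp (continuous_fill p)).continuousOn
      (fun _ => hφ0 _) ⟨B, fun _ => hφB _⟩ ⟨r, hr, hvan⟩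
  · have hPC : ∀ u, u ∈ PROJ p '' C := fun u => by_contra fun hu => hne ⟨u, hu⟩
    have h0 : ∀ x, φ (fill p (PROJ p x)) = 0 := fun x =>
      hvan _ (((isPseudoDist_dL1 p).sInf_image_eq_zero (hPC _)).trans_lt hr)
    simp [h0]

lemma exists_measureReal_le (H : MOTendstoProj C μn μ)
    (hCz : ∀ p, 1 ≤ p → ∀ z ∈ PROJ p '' C, fill p z ∈ C) (hμn : ∀ n, MemMOseq C (μn n))
    {ρ : ℝ} (hρ : 0 < ρ) : ∃ M, ∀ n, (μn n).real {x | ρ ≤ dseqSet x C} ≤ M := by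
  obtain ⟨p, hp, hpρ⟩ := ((eventually_ge_atTop 1).and
    (eventually_inv_two_pow_le (show 0 < ρ / 8 by positivity))).exists
  have hfill := fun x => abs_le.1 (abs_dseqSet_fill_PROJ_sub_le p x C)
  obtain ⟨M, hM⟩ := (H.tendsto_integral_comp_fill hp (hCz p hp) (φ := cutoff C (ρ / 2))
    continuous_cutoff cutoff_nonneg cutoff_le_one (show 0 < ρ / 4 by positivity)
    fun x hx => cutoff_eq_zero (by positivity) (by linarith)).bddAbove_range
  refine ⟨M, fun n => (measureReal_le_integral_of_one_le ?_ (fun _ => cutoff_nonneg _)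
    fun x hx => (cutoff_eq_one (by positivity) ?_).ge).trans (hM ⟨n, rfl⟩)⟩
  · exact (hμn n).integrable
      (continuous_cutoff.comp ((continuous_fill p).comp (continuous_PROJ p)))
      (fun _ => cutoff_nonneg _) (fun _ => cutoff_le_one _) (show 0 < ρ / 8 by positivity)
      fun x hx => cutoff_eq_zero (by positivity) (by linarith [hfill x])
  · linarith [hfill x, show ρ ≤ dseqSet x C from hx]

lemma tendsto_integral_of_abs_sub_le (H : MOTendstoProj C μn μ)
    (hCz : ∀ p, 1 ≤ p → ∀ z ∈ PROJ p '' C, fill p z ∈ C) (hμ : MemMOseq C μ)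
    (hμn : ∀ n, MemMOseq C (μn n)) {f : (ℕ → ℝ≥0) → ℝ} {L B r : ℝ} (hL : 0 ≤ L)
    (hf : ∀ x y, |f x - f y| ≤ L * dseq x y) (hf0 : ∀ x, 0 ≤ f x) (hfB : ∀ x, f x ≤ B)
    (hr : 0 < r) (hfr : ∀ x, dseqSet x C < r → f x = 0) :
    Tendsto (fun n => ∫ x, f x ∂μn n) atTop (𝓝 (∫ x, f x ∂μ)) := by
  have hfc : Continuous f :=
    isPseudoDist_dseq.continuous_of_abs_sub_le (fun y => (continuous_dseq_left y).continuousAt) hf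
  set S := {x | r / 2 ≤ dseqSet x C}
  have hS : MeasurableSet S := (isClosed_le continuous_const (continuous_dseqSet C)).measurableSet
  obtain ⟨M, hM⟩ := H.exists_measureReal_le hCz hμn (half_pos hr)
  set M' := max M (μ.real S)
  have happrox : ∀ p : ℕ, (2 : ℝ)⁻¹ ^ p ≤ r / 2 → ∀ ν, MemMOseq C ν →
      |∫ x, f x ∂ν - ∫ x, f (fill p (PROJ p x)) ∂ν| ≤ L * (2 : ℝ)⁻¹ ^ p * ν.real S := by
    intro p hp ν hν
    have hfill := fun x => abs_le.1 (abs_dseqSet_fill_PROJ_sub_le p x C)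
    refine abs_integral_sub_le_of_le_indicator (hν.integrable hfc hf0 hfB hr hfr)
      (hν.integrable (hfc.comp ((continuous_fill p).comp (continuous_PROJ p))) (fun _ => hf0 _)
        (fun _ => hfB _) (half_pos hr) fun x hx => hfr _ (by linarith [hfill x]))
      hS (hν.2 _ (half_pos hr)).ne fun x => ?_
    by_cases hxS : x ∈ S
    · rw [indicator_of_mem hxS]
      exact (hf _ _).trans (mul_le_mul_of_nonneg_left (dseq_fill_PROJ_le p x) hL)
    · have hx : dseqSet x C < r / 2 := not_le.1 hxS
      rw [indicator_of_notMem hxS, hfr x (by linarith),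
        hfr _ (by linarith [hfill x]), sub_zero, abs_zero]
  refine tendsto_of_forall_approx (l' := atTop) (ε := fun p => L * (2 : ℝ)⁻¹ ^ p * M')
    (b := fun p n => ∫ x, f (fill p (PROJ p x)) ∂μn n)
    (b₀ := fun p => ∫ x, f (fill p (PROJ p x)) ∂μ) ?_ ?_ ?_ ?_
  · simpa using ((_root_.tendsto_pow_atTop_nhds_zero_of_lt_one (by norm_num)
      (by norm_num : (2 : ℝ)⁻¹ < 1)).const_mul L).mul_const M'
  · filter_upwards [eventually_ge_atTop 1] with p hp
    exact H.tendsto_integral_comp_fill hp (hCz p hp) hfc hf0 hfB hr hfr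
  · filter_upwards [eventually_inv_two_pow_le (half_pos hr)] with p hp n
    exact (happrox p hp _ (hμn n)).trans (by gcongr; exact (hM n).trans (le_max_left _ _))
  · filter_upwards [eventually_inv_two_pow_le (half_pos hr)] with p hp
    exact (happrox p hp _ hμ).trans (by gcongr; exact le_max_right _ _)

lemma le_liminf_measure_of_isOpen (H : MOTendstoProj C μn μ)
    (hCz : ∀ p, 1 ≤ p → ∀ z ∈ PROJ p '' C, fill p z ∈ C) (hμ : MemMOseq C μ)
    (hμn : ∀ n, MemMOseq C (μn n)) {G : Set (ℕ → ℝ≥0)} (hG : IsOpen G) {ρ : ℝ} (hρ : 0 < ρ)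
    (hGρ : ∀ x ∈ G, ρ ≤ dseqSet x C) : μ G ≤ liminf (fun n => μn n G) atTop := by
  rcases C.eq_empty_or_nonempty with rfl | ⟨c, hc⟩
  · have : G = ∅ := eq_empty_of_forall_notMem fun x hx => by
      simpa [dseqSet] using (hρ.trans_le (hGρ x hx))
    simp [this]
  have hcG : c ∈ Gᶜ := fun hcG => by
    have := hGρ c hcG
    rw [dseqSet, isPseudoDist_dseq.sInf_image_eq_zero hc] at this
    linarith
  set h : ℕ → (ℕ → ℝ≥0) → ℝ := fun k x => min 1 (k * dseqSet x Gᶜ)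
  have hG0 : ∀ k, ∀ x ∉ G, h k x = 0 := fun k x hx => by
    simp [h, dseqSet, isPseudoDist_dseq.sInf_image_eq_zero (show x ∈ Gᶜ from hx)]
  have hρ0 : ∀ k x, dseqSet x C < ρ → h k x = 0 := fun k x hx =>
    hG0 k x fun hxG => (hGρ x hxG).not_gt hx
  refine le_of_tendsto' (tendsto_lintegral_min_one_mul_dseqSet_compl hG ⟨c, hcG⟩ μ) fun k => ?_
  have hk : Tendsto (fun n => ∫ x, h k x ∂μn n) atTop (𝓝 (∫ x, h k x ∂μ)) :=
    H.tendsto_integral_of_abs_sub_le hCz hμ hμn k.cast_nonneg (abs_min_one_mul_dseqSet_sub_le k)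
      (min_one_mul_dseqSet_nonneg k) (fun _ => min_le_left _ _) hρ (hρ0 k)
  have hint : ∀ ν, MemMOseq C ν →
      ENNReal.ofReal (∫ x, h k x ∂ν) = ∫⁻ x, ENNReal.ofReal (h k x) ∂ν := fun ν hν =>
    ofReal_integral_eq_lintegral_ofReal (hν.integrable (continuous_min_one_mul_dseqSet k)
      (min_one_mul_dseqSet_nonneg k) (fun _ => min_le_left _ _) hρ (hρ0 k))
      (ae_of_all _ (min_one_mul_dseqSet_nonneg k))
  calc ∫⁻ x, ENNReal.ofReal (h k x) ∂μ
      = liminf (fun n => ENNReal.ofReal (∫ x, h k x ∂μn n)) atTop := by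
        rw [← hint μ hμ]
        exact (((ENNReal.continuous_ofReal.tendsto _).comp hk).liminf_eq).symm
    _ ≤ liminf (fun n => μn n G) atTop := liminf_le_liminf (Eventually.of_forall fun n => by
        rw [hint _ (hμn n), ← lintegral_indicator_one hG.measurableSet]
        refine lintegral_mono fun x => ?_
        by_cases hx : x ∈ G
        · rw [indicator_of_mem hx, Pi.one_apply]
          exact ENNReal.ofReal_le_one.2 (min_le_left _ _)
        · simp [hG0 k x hx])

lemma eventually_lt_integral (H : MOTendstoProj C μn μ)
    (hCz : ∀ p, 1 ≤ p → ∀ z ∈ PROJ p '' C, fill p z ∈ C) (hμ : MemMOseq C μ)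
    (hμn : ∀ n, MemMOseq C (μn n)) {f : (ℕ → ℝ≥0) → ℝ} {B r : ℝ} (hf : Continuous f)
    (hf0 : ∀ x, 0 ≤ f x) (hfB : ∀ x, f x ≤ B) (hr : 0 < r)
    (hfr : ∀ x, dseqSet x C < r → f x = 0) {t : ℝ} (ht : t < ∫ x, f x ∂μ) :
    ∀ᶠ n in atTop, t < ∫ x, f x ∂μn n := by
  set W := {x | r / 2 < dseqSet x C}
  have hW : IsOpen W := isOpen_lt continuous_const (continuous_dseqSet C)
  have hsupp : ∀ ν : Measure (ℕ → ℝ≥0),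
      ∫⁻ x in W, ENNReal.ofReal (f x) ∂ν = ∫⁻ x, ENNReal.ofReal (f x) ∂ν := fun ν =>
    setLIntegral_eq_of_support_subset fun x hx => by
      by_contra hxW
      have hxr : dseqSet x C ≤ r / 2 := by simpa [W] using hxW
      exact hx (by simp [hfr x (by linarith)])
  -- restricting to `W` turns the bound for open sets bounded away from `C` into one for all
  -- open sets, as the portmanteau theorem requires
  have hliminf : ∫⁻ x, ENNReal.ofReal (f x) ∂μ ≤
      liminf (fun n => ∫⁻ x, ENNReal.ofReal (f x) ∂μn n) atTop := by
    simpa only [hsupp] using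
      lintegral_le_liminf_lintegral_of_forall_isOpen_measure_le_liminf_measure
        (μ := μ.restrict W) (μs := fun n => (μn n).restrict W) hf hf0 fun G hG => by
          simp only [Measure.restrict_apply hG.measurableSet]
          exact H.le_liminf_measure_of_isOpen hCz hμ hμn (hG.inter hW) (half_pos hr)
            fun x hx => hx.2.le
  rcases lt_or_ge t 0 with ht0 | ht0
  · exact Eventually.of_forall fun n => ht0.trans_le (integral_nonneg hf0)
  have hofReal : ∀ ν, MemMOseq C ν →
      ENNReal.ofReal (∫ x, f x ∂ν) = ∫⁻ x, ENNReal.ofReal (f x) ∂ν := fun ν hν =>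
    ofReal_integral_eq_lintegral_ofReal (hν.integrable hf hf0 hfB hr hfr) (ae_of_all _ hf0)
  have hlt : ENNReal.ofReal t < liminf (fun n => ∫⁻ x, ENNReal.ofReal (f x) ∂μn n) atTop :=
    (ENNReal.ofReal_lt_ofReal_iff'.2 ⟨ht, ht0.trans_lt ht⟩).trans_le (hofReal μ hμ ▸ hliminf)
  filter_upwards [eventually_lt_of_lt_liminf hlt] with n hn
  rw [← hofReal _ (hμn n)] at hn
  exact (ENNReal.ofReal_lt_ofReal_iff'.1 hn).1

lemma moTendstoSeq (H : MOTendstoProj C μn μ)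
    (hCz : ∀ p, 1 ≤ p → ∀ z ∈ PROJ p '' C, fill p z ∈ C) (hμ : MemMOseq C μ)
    (hμn : ∀ n, MemMOseq C (μn n)) : MOTendstoSeq C μn μ := by
  intro f hf
  have hfc := hf.continuous
  obtain ⟨-, hf0, ⟨B, hfB⟩, r, hr, hfr⟩ := hf
  have hB : 0 ≤ B := (hf0 0).trans (hfB 0)
  set ψ := fun x => B * cutoff C r x
  have hψ0 : ∀ x, 0 ≤ ψ x := fun x => mul_nonneg hB (cutoff_nonneg x)
  have hψB : ∀ x, ψ x ≤ B := fun x => mul_le_of_le_one_right hB (cutoff_le_one x)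
  have hψr : ∀ x, dseqSet x C < r / 2 → ψ x = 0 := fun x hx => by
    simp [ψ, cutoff_eq_zero hr hx.le]
  have hfψ : ∀ x, f x ≤ ψ x := fun x => by
    by_cases hx : r ≤ dseqSet x C
    · simpa [ψ, cutoff_eq_one hr hx] using hfB x
    · rw [hfr x (not_le.1 hx)]; exact hψ0 x
  have hψc : Continuous ψ := continuous_const.mul continuous_cutoff
  have hsub : ∀ ν, MemMOseq C ν → ∫ x, ψ x - f x ∂ν = ∫ x, ψ x ∂ν - ∫ x, f x ∂ν := fun ν hν =>
    integral_sub (hν.integrable hψc hψ0 hψB (half_pos hr) hψr) (hν.integrable hfc hf0 hfB hr hfr)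
  have hψlim : Tendsto (fun n => ∫ x, ψ x ∂μn n) atTop (𝓝 (∫ x, ψ x ∂μ)) :=
    H.tendsto_integral_of_abs_sub_le hCz hμ hμn (by positivity : 0 ≤ B * (2 / r))
      (fun x y => by
        rw [← mul_sub, abs_mul, abs_of_nonneg hB, mul_assoc]
        exact mul_le_mul_of_nonneg_left (abs_cutoff_sub_le hr x y) hB)
      hψ0 hψB (half_pos hr) hψr
  refine tendsto_of_forall_lt_of_forall_lt_sub
    (fun t ht => H.eventually_lt_integral hCz hμ hμn hfc hf0 hfB hr hfr ht) (fun t ht => ?_) hψlim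
  have hψf_lim := H.eventually_lt_integral hCz hμ hμn (f := fun x => ψ x - f x) (hψc.sub hfc)
    (fun x => sub_nonneg.2 (hfψ x)) (B := B)
    (fun x => by linarith [hψB x, hf0 x]) (half_pos hr)
    (fun x hx => by rw [hψr x hx, hfr x (by linarith)]; simp) (t := t) (by rwa [hsub μ hμ])
  filter_upwards [hψf_lim] with n hn
  rwa [hsub _ (hμn n)] at hn

end MOTendstoProj

theorem stmt15_general (C : Set (ℕ → ℝ≥0))
    (hCz : ∀ p : ℕ, 1 ≤ p → ∀ z ∈ PROJ p '' C,
        (fun n => if h : n < p then z ⟨n, h⟩ else 0) ∈ C)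
    (μ0 : Measure (ℕ → ℝ≥0)) (μn : ℕ → Measure (ℕ → ℝ≥0))
    (hμ0 : MemMOseq C μ0) (hμn : ∀ n, MemMOseq C (μn n)) :
    MOTendstoSeq C μn μ0 ↔
      ∀ p : ℕ, 1 ≤ p → ((PROJ p '' C)ᶜ : Set (Fin p → ℝ≥0)).Nonempty →
        ∀ g : (Fin p → ℝ≥0) → ℝ, ContinuousOn g (PROJ p '' C)ᶜ →
          (∀ u, 0 ≤ g u) → (∃ B : ℝ, ∀ u, g u ≤ B) →
          (∃ r > 0, ∀ u, dL1Set u (PROJ p '' C) < r → g u = 0) →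
          Tendsto (fun n => ∫ x, g (PROJ p x) ∂ μn n) atTop
            (𝓝 (∫ x, g (PROJ p x) ∂ μ0)) :=
  ⟨MOTendstoSeq.moTendstoProj, fun H => MOTendstoProj.moTendstoSeq H hCz hμ0 hμn⟩

/-- Reduction of `M(ℝ₊^∞ \ C)` convergence to finite-dimensional convergence:
if every projection `PROJ_p(C)` is closed and refilling with zeros maps it back
into `C`, then `μ_n → μ_0` in `M(ℝ₊^∞ \ C)` iff for every `p ≥ 1` with
`ℝ₊^p \ PROJ_p(C) ≠ ∅` the pushforwards under `PROJ_p` converge in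
`M(ℝ₊^p \ PROJ_p(C))`. -/
theorem stmt15 (C : Set (ℕ → ℝ≥0)) (hC : IsClosed C)
    (hCp : ∀ p : ℕ, 1 ≤ p → IsClosed (PROJ p '' C))
    (hCz : ∀ p : ℕ, 1 ≤ p → ∀ z ∈ PROJ p '' C,
        (fun n => if h : n < p then z ⟨n, h⟩ else 0) ∈ C)
    (μ0 : Measure (ℕ → ℝ≥0)) (μn : ℕ → Measure (ℕ → ℝ≥0))
    (hμ0 : MemMOseq C μ0) (hμn : ∀ n, MemMOseq C (μn n)) :
    MOTendstoSeq C μn μ0 ↔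
      ∀ p : ℕ, 1 ≤ p → ((PROJ p '' C)ᶜ : Set (Fin p → ℝ≥0)).Nonempty →
        ∀ g : (Fin p → ℝ≥0) → ℝ, ContinuousOn g (PROJ p '' C)ᶜ →
          (∀ u, 0 ≤ g u) → (∃ B : ℝ, ∀ u, g u ≤ B) →
          (∃ r > 0, ∀ u, dL1Set u (PROJ p '' C) < r → g u = 0) →
          Tendsto (fun n => ∫ x, g (PROJ p x) ∂ μn n) atTop
            (𝓝 (∫ x, g (PROJ p x) ∂ μ0)) :=
  stmt15_general C hCz μ0 μn hμ0 hμn
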